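/- arXiv:0912.4940 — 2 statements merged into one kernel-verified Lean document; each statement's English description precedes it below -/
import Mathlib

section
/- Let 𝔥 be a real Lie algebra, let f : 𝔥 → gl(V) be a representation on a nonzero finite-dimensional real vector space V such that (f, V) is irreducible, and let E ∈ 𝔥 be a central element such that f(E) has no real eigenvalue. Then there exist real numbers a, b with b ≠ 0 and an ℝ-linear endomorphism J of V such that J ∘ J = −id_V, J ∘ f(X) = f(X) ∘ J for all X ∈ 𝔥, and f(E) = a·id_V + b·J. -/
attribute [local instance 100] LieRing.ofAssociativeRing

/-!
Since `E` is central, `T = f E` commutes with every `f X`, hence so does every polynomial in `T`,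
and the kernel of such an endomorphism is invariant: by irreducibility it is either zero or
injective. An irreducible factor `q` of the minimal polynomial of `T` has no real root, so
`q = (X - a)² + b²` with `b ≠ 0`, and `q(T)` cannot be injective, for then the cofactor of `q` in
the minimal polynomial would annihilate `T`. Hence `(T - a)² = -b²`, and `J = b⁻¹ (T - a)` is the
complex structure.
-/

open Polynomial

theorem LieHom.commute_of_lie_eq_zero {R L A : Type*} [CommRing R] [LieRing L] [LieAlgebra R L]
    [Ring A] [Algebra R A] (f : L →ₗ⁅R⁆ A) {x y : L} (h : ⁅x, y⁆ = 0) :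
    Commute (f x) (f y) := by
  have := f.map_lie x y
  rwa [h, map_zero, Ring.lie_def, eq_comm, sub_eq_zero] at this

theorem Commute.aeval_left {R A : Type*} [CommSemiring R] [Semiring A] [Algebra R A] {a b : A}
    (h : Commute a b) (p : R[X]) : Commute (aeval a p) b := by
  induction p using Polynomial.induction_on' with
  | add p q hp hq => simpa only [map_add] using hp.add_left hq
  | monomial n r =>
    simpa only [aeval_monomial] using (Algebra.commute_algebraMap_left r b).mul_left (h.pow_left n)

theorem Irreducible.natDegree_eq_two_of_forall_not_isRoot {q : ℝ[X]} (hq : Irreducible q)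
    (hroot : ∀ x, ¬q.IsRoot x) : q.natDegree = 2 := by
  have hne_one : q.natDegree ≠ 1 := fun h ↦
    (exists_root_of_degree_eq_one (degree_eq_iff_natDegree_eq_of_pos one_pos |>.2 h)).elim hroot
  have := hq.natDegree_pos
  have := hq.natDegree_le_two
  omega

theorem Polynomial.Monic.exists_eq_sub_sq_add_sq {q : ℝ[X]} (hm : q.Monic) (hdeg : q.natDegree = 2)
    (hroot : ∀ x, ¬q.IsRoot x) : ∃ a b : ℝ, b ≠ 0 ∧ q = (X - C a) ^ 2 + C (b ^ 2) := by
  obtain ⟨c, d, rfl⟩ := isMonicOfDegree_two_iff.1 ⟨hdeg, hm⟩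
  have hdisc : 0 < d - c ^ 2 / 4 := by
    by_contra! h
    apply hroot (-c / 2 + √(c ^ 2 / 4 - d))
    have hs : √(c ^ 2 / 4 - d) ^ 2 = c ^ 2 / 4 - d := Real.sq_sqrt (by linarith)
    simp only [IsRoot, eval_add, eval_mul, eval_pow, eval_X, eval_C]
    linear_combination hs
  refine ⟨-c / 2, √(d - c ^ 2 / 4), (Real.sqrt_pos.2 hdisc).ne', ?_⟩
  refine Polynomial.funext fun x ↦ ?_
  simp only [eval_add, eval_mul, eval_pow, eval_sub, eval_X, eval_C, Real.sq_sqrt hdisc.le]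
  ring

theorem inv_smul_mul_self_eq_neg_one {K A : Type*} [Field K] [Ring A] [Algebra K A] {S : A} {b : K}
    (hb : b ≠ 0) (h : S ^ 2 + algebraMap K A (b ^ 2) = 0) : (b⁻¹ • S) * (b⁻¹ • S) = -1 := by
  rw [smul_mul_smul_comm, ← sq S, eq_neg_of_add_eq_zero_left h, smul_neg, Algebra.smul_def,
    ← map_mul]
  field_simp
  simp

section Schur

variable {R M ι : Type*}

theorem Module.End.eq_zero_of_forall_commute_of_ker_ne_bot [Semiring R] [AddCommMonoid M]
    [Module R M] (ρ : ι → Module.End R M)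
    (hirr : ∀ W : Submodule R M, (∀ i, ∀ v ∈ W, ρ i v ∈ W) → W = ⊥ ∨ W = ⊤)
    {S : Module.End R M} (hS : ∀ i, Commute S (ρ i)) (hker : LinearMap.ker S ≠ ⊥) : S = 0 := by
  have hinv : ∀ i, ∀ v ∈ LinearMap.ker S, ρ i v ∈ LinearMap.ker S := fun i v hv ↦ by
    rw [LinearMap.mem_ker, ← Module.End.mul_apply, hS i, Module.End.mul_apply, hv, map_zero]
  exact LinearMap.ker_eq_top.1 ((hirr _ hinv).resolve_left hker)

theorem Module.End.aeval_eq_zero_of_dvd_minpoly [Field R] [AddCommGroup M] [Module R M]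
    [FiniteDimensional R M] (ρ : ι → Module.End R M)
    (hirr : ∀ W : Submodule R M, (∀ i, ∀ v ∈ W, ρ i v ∈ W) → W = ⊥ ∨ W = ⊤)
    {T : Module.End R M} (hT : ∀ i, Commute T (ρ i)) {q : R[X]} (hqm : q.Monic)
    (hq : ¬IsUnit q) (hdvd : q ∣ minpoly R T) : aeval T q = 0 := by
  refine eq_zero_of_forall_commute_of_ker_ne_bot ρ hirr (fun i ↦ (hT i).aeval_left q) fun hker ↦ ?_
  obtain ⟨r, hr⟩ := hdvd
  have hr0 : aeval T r = 0 := by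
    rw [← ((LinearMap.isUnit_iff_ker_eq_bot _).2 hker).mul_right_eq_zero, ← map_mul, ← hr,
      minpoly.aeval]
  have hT_int : IsIntegral R T := Algebra.IsIntegral.isIntegral T
  have hrm : r.Monic := hqm.of_mul_monic_left (hr ▸ minpoly.monic hT_int)
  exact minpoly.aeval_ne_zero_of_dvdNotUnit_minpoly hT_int hrm
    ⟨hrm.ne_zero, q, hq, by rw [hr, mul_comm]⟩ hr0

end Schur

/-- If `(f, V)` is an irreducible real representation of `𝔥` on a nonzero
finite-dimensional real vector space, `E ∈ 𝔥` is central, and `f(E)` has no real eigenvalue,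
then there are `a b : ℝ` with `b ≠ 0` and a complex structure `J` on `V` commuting with all
`f(X)` such that `f(E) = a • id_V + b • J`. -/
theorem central_no_real_eigenvalue_complex_structure {H V : Type*} [LieRing H] [LieAlgebra ℝ H]
    [AddCommGroup V] [Module ℝ V] [FiniteDimensional ℝ V] [Nontrivial V]
    (f : H →ₗ⁅ℝ⁆ Module.End ℝ V)
    (hirr : ∀ W : Submodule ℝ V, (∀ X : H, ∀ v ∈ W, f X v ∈ W) → W = ⊥ ∨ W = ⊤)
    (E : H) (hE : ∀ X : H, ⁅E, X⁆ = 0)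
    (hnoeig : ∀ a : ℝ, ¬ Module.End.HasEigenvalue (f E) a) :
    ∃ (a b : ℝ) (J : Module.End ℝ V), b ≠ 0 ∧ J * J = -1 ∧
      (∀ X : H, J * f X = f X * J) ∧ f E = a • (1 : Module.End ℝ V) + b • J := by
  set T := f E
  have hT : ∀ X, Commute T (f X) := fun X ↦ f.commute_of_lie_eq_zero (hE X)
  obtain ⟨q, hqm, hqirr, hqdvd⟩ :=
    (minpoly ℝ T).exists_monic_irreducible_factor (minpoly.not_isUnit ℝ T)
  have hqroot : ∀ x, ¬q.IsRoot x := fun x hx ↦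
    hnoeig x (Module.End.hasEigenvalue_iff_isRoot.2 (hx.dvd hqdvd))
  have hqT : aeval T q = 0 :=
    Module.End.aeval_eq_zero_of_dvd_minpoly (fun X ↦ f X) hirr hT hqm hqirr.not_isUnit hqdvd
  obtain ⟨a, b, hb, rfl⟩ :=
    hqm.exists_eq_sub_sq_add_sq (hqirr.natDegree_eq_two_of_forall_not_isRoot hqroot) hqroot
  refine ⟨a, b, b⁻¹ • (T - algebraMap ℝ _ a), hb, ?_, fun X ↦ ?_, ?_⟩
  · refine inv_smul_mul_self_eq_neg_one hb ?_
    simpa only [map_add, map_pow, map_sub, aeval_X, aeval_C] using hqT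
  · exact (((hT X).sub_left (Algebra.commute_algebraMap_left a _)).smul_left b⁻¹).eq
  · rw [smul_inv_smul₀ hb, Algebra.algebraMap_eq_smul_one, add_sub_cancel]
end

section
/- Fix integers n ≥ 2 and 1 ≤ r ≤ n−1, and let 𝔨 be the Lie subalgebra of gl(n, ℝ) consisting of all matrices whose first r columns are zero. Then there is no vector subspace 𝔪 of gl(n, ℝ) such that gl(n, ℝ) = 𝔨 ⊕ 𝔪 as vector spaces and [𝔨, 𝔪] ⊆ 𝔪; that is, the homogeneous space GL(n, ℝ)/K is not reductive. -/
/-!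
Pick columns `a < r ≤ b` and let `x = E_ab ∈ 𝔨` be the matrix unit. Since `x² = 0`, for every `Y`
the double commutator `[x, [x, Y]] = -2 x Y x = -2 Y_ba x` lies in `𝔨`; for `Y ∈ 𝔪` it also lies
in `𝔪`, hence vanishes. So the `(b, a)` entry vanishes on `𝔪`, and on `𝔨` because `a < r`,
contradicting `𝔨 + 𝔪 = gl(n, ℝ)`.
-/
/-- The Lie subalgebra `𝔨` of `gl(n, ℝ)` of matrices whose first `r` columns vanish. -/
def glK (n r : ℕ) : Submodule ℝ (Matrix (Fin n) (Fin n) ℝ) where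
  carrier := {X | ∀ (i j : Fin n), (j : ℕ) < r → X i j = 0}
  add_mem' := by
    intro X Y hX hY i j hj
    simp [Matrix.add_apply, hX i j hj, hY i j hj]
  zero_mem' := by intro i j hj; simp
  smul_mem' := by
    intro c X hX i j hj
    simp [Matrix.smul_apply, hX i j hj]

theorem lie_lie_of_mul_self_eq_zero {A : Type*} [Ring A] {x : A} (hx : x * x = 0) (y : A) :
    ⁅x, ⁅x, y⁆⁆ = -(2 • (x * y * x)) := by
  have h : ⁅x, ⁅x, y⁆⁆ = x * x * y - 2 • (x * y * x) + y * (x * x) := by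
    simp only [Ring.lie_def]; noncomm_ring
  rw [h, hx, mul_zero, zero_mul, zero_sub, add_zero]

theorem single_mem_glK {n r : ℕ} (i : Fin n) {j : Fin n} (hj : r ≤ j) (c : ℝ) :
    Matrix.single i j c ∈ glK n r := by
  intro k l hl
  have hlj : j ≠ l := by rintro rfl; omega
  simp [hlj]

theorem apply_eq_zero_of_mem_of_disjoint_glK {n r : ℕ}
    {𝔪 : Submodule ℝ (Matrix (Fin n) (Fin n) ℝ)} (hdisj : Disjoint (glK n r) 𝔪)
    (hinv : ∀ X ∈ glK n r, ∀ Y ∈ 𝔪, X * Y - Y * X ∈ 𝔪) (a b : Fin n) (ha : (a : ℕ) < r)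
    (hb : r ≤ b) {Y : Matrix (Fin n) (Fin n) ℝ} (hY : Y ∈ 𝔪) :
    Y b a = 0 := by
  set x := Matrix.single a b (1 : ℝ)
  have hx : x ∈ glK n r := single_mem_glK a hb 1
  have hab : b ≠ a := by rintro rfl; omega
  have hxx : x * x = 0 := Matrix.single_mul_single_of_ne 1 a b a hab 1
  have hsingle : ⁅x, ⁅x, Y⁆⁆ = -Matrix.single a b (2 • Y b a) := by
    rw [lie_lie_of_mul_self_eq_zero hxx, Matrix.single_mul_mul_single, Matrix.smul_single,
      one_mul, mul_one]
  have hzero : ⁅x, ⁅x, Y⁆⁆ = 0 := by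
    refine Submodule.disjoint_def.mp hdisj _ (hsingle ▸ neg_mem (single_mem_glK a hb _)) ?_
    simp only [Ring.lie_def]
    exact hinv x hx _ (hinv x hx Y hY)
  have hentry := congrFun (congrFun hzero a) b
  rw [hsingle] at hentry
  simpa using hentry

theorem gl_example_not_reductive_general (n r : ℕ) (hr1 : 1 ≤ r) (hrn : r ≤ n - 1) :
    ¬ ∃ m : Submodule ℝ (Matrix (Fin n) (Fin n) ℝ),
        IsCompl (glK n r) m ∧ ∀ X ∈ glK n r, ∀ Y ∈ m, X * Y - Y * X ∈ m := by
  rintro ⟨𝔪, hcompl, hinv⟩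
  let a : Fin n := ⟨0, by omega⟩
  let b : Fin n := ⟨r, by omega⟩
  have hsup : Matrix.single b a (1 : ℝ) ∈ glK n r ⊔ 𝔪 :=
    hcompl.sup_eq_top ▸ Submodule.mem_top
  obtain ⟨k, hk, m, hm, hkm⟩ := Submodule.mem_sup.mp hsup
  have hba := congrFun (congrFun hkm b) a
  rw [Matrix.add_apply, hk b a hr1,
    apply_eq_zero_of_mem_of_disjoint_glK hcompl.disjoint hinv a b hr1 le_rfl hm] at hba
  simp at hba

/-- Example 3.1 of the paper. For `n ≥ 2` and `1 ≤ r ≤ n − 1`, there is no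
`ad(𝔨)`-invariant vector space complement `𝔪` of `𝔨` in `gl(n, ℝ)`: the homogeneous space
`GL(n, ℝ)/K` is not reductive. -/
theorem gl_example_not_reductive (n r : ℕ) (hn : 2 ≤ n) (hr1 : 1 ≤ r) (hrn : r ≤ n - 1) :
    ¬ ∃ m : Submodule ℝ (Matrix (Fin n) (Fin n) ℝ),
        IsCompl (glK n r) m ∧ ∀ X ∈ glK n r, ∀ Y ∈ m, X * Y - Y * X ∈ m :=
  gl_example_not_reductive_general n r hr1 hrn
end
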